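/- Fix odd n. If Q is a Hermitian operator on (C²)^{⊗n} satisfying Q ≥ ρ^n_{o₊ +} + ρ^n_{o_× ×} for all o₊, o_× ∈ {0,1} (where ρ^n_{y b} = 2^{−(n−1)} Σ_{⊕x = y} U_b|x⟩⟨x|U_b†, U_+ = I^{⊗n}, U_× = H^{⊗n}), then Q ⊗ ¼I₄ on (C²)^{⊗(n+2)} satisfies the analogous constraints for strings of length n+2. -/

import Mathlib

/-!
In the Bell basis `β_{st}` (`β_{00}, β_{01}, β_{10}, β_{11} = Φ⁺, Φ⁻, Ψ⁺, Ψ⁻`) the two-qubit states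
are `ρ²_{s,+} = ½ Σ_t |β_{st}⟩⟨β_{st}|` and `ρ²_{t,×} = ½ Σ_s |β_{st}⟩⟨β_{st}|`, while splitting off
the last two bits gives `ρ^{n+2}_{y,b} = ½ Σ_s ρⁿ_{y⊕s,b} ⊗ ρ²_{s,b}`. Since also
`¼ I₄ = ¼ Σ_{s,t} |β_{st}⟩⟨β_{st}|`, this yields
`Q ⊗ ¼I₄ - ρ^{n+2}_{o₊,+} - ρ^{n+2}_{o×,×}`
`  = ¼ Σ_{s,t} (Q - ρⁿ_{o₊⊕s,+} - ρⁿ_{o×⊕t,×}) ⊗ |β_{st}⟩⟨β_{st}|`,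
a sum of Kronecker products of positive semidefinite matrices.
-/

open Matrix
open scoped ComplexOrder Kronecker

/-- The `n`-fold tensor power `H^{⊗n}` of the Hadamard matrix. -/
noncomputable def Hn (n : ℕ) : Matrix (Fin n → Bool) (Fin n → Bool) ℂ :=
  Matrix.of fun x y => (∏ i, if x i && y i then (-1 : ℂ) else 1) / (Real.sqrt 2 : ℂ) ^ n

/-- The XOR of the bits of the string `x`. -/
def xorf {n : ℕ} (x : Fin n → Bool) : Bool := (List.ofFn x).foldr xor false

/-- `ρⁿ_{y,+} = 2^{−(n−1)} Σ_{⊕x = y} |x⟩⟨x|`. -/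
noncomputable def rhoXorP (n : ℕ) (y : Bool) : Matrix (Fin n → Bool) (Fin n → Bool) ℂ :=
  ((2 : ℂ) ^ (n - 1))⁻¹ •
    ∑ x ∈ Finset.univ.filter (fun x => xorf x = y), Matrix.single x x 1

/-- `ρⁿ_{y,×} = 2^{−(n−1)} Σ_{⊕x = y} H^{⊗n}|x⟩⟨x|H^{⊗n}†`. -/
noncomputable def rhoXorT (n : ℕ) (y : Bool) : Matrix (Fin n → Bool) (Fin n → Bool) ℂ :=
  ((2 : ℂ) ^ (n - 1))⁻¹ •
    ∑ x ∈ Finset.univ.filter (fun x => xorf x = y),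
      Hn n * Matrix.single x x 1 * (Hn n)ᴴ

/-- `ρ^{n+2}_{y,+}` on strings of length `n+2`, realized on the index type
`(Fin n → Bool) × (Fin 2 → Bool)` (concatenation of the string). -/
noncomputable def rhoXorP' (n : ℕ) (y : Bool) :
    Matrix ((Fin n → Bool) × (Fin 2 → Bool)) ((Fin n → Bool) × (Fin 2 → Bool)) ℂ :=
  ((2 : ℂ) ^ (n + 1))⁻¹ •
    ∑ xz ∈ Finset.univ.filter (fun xz : (Fin n → Bool) × (Fin 2 → Bool) =>
        xor (xorf xz.1) (xorf xz.2) = y),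
      Matrix.single xz xz 1

/-- `ρ^{n+2}_{y,×}` on strings of length `n+2`, with `H^{⊗(n+2)} = H^{⊗n} ⊗ H^{⊗2}`. -/
noncomputable def rhoXorT' (n : ℕ) (y : Bool) :
    Matrix ((Fin n → Bool) × (Fin 2 → Bool)) ((Fin n → Bool) × (Fin 2 → Bool)) ℂ :=
  ((2 : ℂ) ^ (n + 1))⁻¹ •
    ∑ xz ∈ Finset.univ.filter (fun xz : (Fin n → Bool) × (Fin 2 → Bool) =>
        xor (xorf xz.1) (xorf xz.2) = y),
      (Hn n ⊗ₖ Hn 2) * Matrix.single xz xz 1 * (Hn n ⊗ₖ Hn 2)ᴴ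

open Finset

section Kronecker

variable {R ι κ l m n p : Type*}

theorem Matrix.sub_kronecker [NonUnitalNonAssocRing R] (A B : Matrix l m R) (C : Matrix n p R) :
    (A - B) ⊗ₖ C = A ⊗ₖ C - B ⊗ₖ C := by
  ext; simp [sub_mul]

theorem Matrix.sum_kronecker_sum [NonUnitalNonAssocSemiring R] (s : Finset ι) (t : Finset κ)
    (A : ι → Matrix l m R) (B : κ → Matrix n p R) :
    (∑ i ∈ s, A i) ⊗ₖ (∑ j ∈ t, B j) = ∑ i ∈ s, ∑ j ∈ t, A i ⊗ₖ B j := by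
  ext; simp [sum_apply, Finset.sum_mul_sum]

end Kronecker

theorem Matrix.mul_single_one_mul_apply {ι R : Type*} [Fintype ι] [DecidableEq ι] [Semiring R]
    (A B : Matrix ι ι R) (x a b : ι) :
    (A * single x x (1 : R) * B : Matrix ι ι R) a b = A a x * B x b := by
  simp [Matrix.mul_apply, single, ite_and, ite_mul]

theorem Matrix.ext_finTwoBool {α : Type*} {A B : Matrix (Fin 2 → Bool) (Fin 2 → Bool) α}
    (h : ∀ a b c d : Bool, A ![a, b] ![c, d] = B ![a, b] ![c, d]) : A = B := by
  have eta (z : Fin 2 → Bool) : ![z 0, z 1] = z := by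
    funext i; fin_cases i <;> rfl
  ext z z'
  simpa only [eta] using h (z 0) (z 1) (z' 0) (z' 1)

theorem Fintype.sum_finTwoBool {M : Type*} [AddCommMonoid M] (f : (Fin 2 → Bool) → M) :
    ∑ z, f z = ∑ a : Bool, ∑ b : Bool, f ![a, b] := by
  rw [← (piFinTwoEquiv fun _ => Bool).symm.sum_comp, Fintype.sum_prod_type]
  rfl

theorem sum_filter_xor_eq {ι κ M : Type*} [Fintype ι] [Fintype κ] [AddCommMonoid M]
    (f : ι → Bool) (g : κ → Bool) (y : Bool) (F : ι × κ → M) :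
    ∑ xz ∈ univ.filter (fun xz : ι × κ => xor (f xz.1) (g xz.2) = y), F xz
      = ∑ s : Bool, ∑ x ∈ univ.filter (fun x => f x = xor y s),
          ∑ z ∈ univ.filter (fun z => g z = s), F (x, z) := by
  rw [← univ_product_univ, sum_filter, sum_product, Fintype.sum_bool, sum_filter, sum_filter,
    ← sum_add_distrib]
  refine Finset.sum_congr rfl fun x _ => ?_
  cases hx : f x <;> cases y <;> simp [hx, sum_filter]

section FiberProj

variable {ι κ : Type*} [Fintype ι] [DecidableEq ι] [Fintype κ] [DecidableEq κ]

noncomputable def fiberProj (U : Matrix ι ι ℂ) (f : ι → Bool) (y : Bool) : Matrix ι ι ℂ :=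
  ∑ x ∈ univ.filter (fun x => f x = y), U * single x x 1 * Uᴴ

theorem fiberProj_kronecker (U : Matrix ι ι ℂ) (V : Matrix κ κ ℂ) (f : ι → Bool)
    (g : κ → Bool) (y : Bool) :
    fiberProj (U ⊗ₖ V) (fun xz => xor (f xz.1) (g xz.2)) y
      = ∑ s : Bool, fiberProj U f (xor y s) ⊗ₖ fiberProj V g s := by
  simp only [fiberProj, sum_kronecker_sum]
  rw [sum_filter_xor_eq]
  refine sum_congr rfl fun s _ => sum_congr rfl fun x _ => sum_congr rfl fun z _ => ?_
  rw [mul_kronecker_mul, mul_kronecker_mul, single_kronecker_single, one_mul,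
    conjTranspose_kronecker]

end FiberProj

theorem rhoXorP_eq_fiberProj (n : ℕ) (y : Bool) :
    rhoXorP n y = ((2 : ℂ) ^ (n - 1))⁻¹ • fiberProj 1 xorf y := by
  simp [rhoXorP, fiberProj]

theorem rhoXorP'_eq_fiberProj (n : ℕ) (y : Bool) :
    rhoXorP' n y = ((2 : ℂ) ^ (n + 1))⁻¹ •
      fiberProj (1 ⊗ₖ 1) (fun xz : (Fin n → Bool) × (Fin 2 → Bool) =>
        xor (xorf xz.1) (xorf xz.2)) y := by
  simp [rhoXorP', fiberProj]

theorem smul_fiberProj_kronecker {n : ℕ} (hn : 1 ≤ n)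
    (U : Matrix (Fin n → Bool) (Fin n → Bool) ℂ) (V : Matrix (Fin 2 → Bool) (Fin 2 → Bool) ℂ)
    (y : Bool) :
    ((2 : ℂ) ^ (n + 1))⁻¹ • fiberProj (U ⊗ₖ V) (fun xz => xor (xorf xz.1) (xorf xz.2)) y
      = (2 : ℂ)⁻¹ • ∑ s : Bool, (((2 : ℂ) ^ (n - 1))⁻¹ • fiberProj U xorf (xor y s))
          ⊗ₖ (((2 : ℂ) ^ (2 - 1))⁻¹ • fiberProj V xorf s) := by
  have hc : ((2 : ℂ) ^ (n + 1))⁻¹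
      = (2 : ℂ)⁻¹ * (((2 : ℂ) ^ (2 - 1))⁻¹ * ((2 : ℂ) ^ (n - 1))⁻¹) := by
    obtain ⟨k, rfl⟩ := Nat.exists_eq_add_of_le' hn
    simp only [Nat.add_sub_cancel, pow_succ]
    ring
  simp only [fiberProj_kronecker, smul_kronecker, kronecker_smul, smul_smul, ← smul_sum, hc]

theorem rhoXorP'_eq_sum {n : ℕ} (hn : 1 ≤ n) (y : Bool) :
    rhoXorP' n y = (2 : ℂ)⁻¹ • ∑ s : Bool, rhoXorP n (xor y s) ⊗ₖ rhoXorP 2 s := by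
  simp only [rhoXorP'_eq_fiberProj, smul_fiberProj_kronecker hn, rhoXorP_eq_fiberProj]

theorem rhoXorT'_eq_sum {n : ℕ} (hn : 1 ≤ n) (y : Bool) :
    rhoXorT' n y = (2 : ℂ)⁻¹ • ∑ s : Bool, rhoXorT n (xor y s) ⊗ₖ rhoXorT 2 s :=
  smul_fiberProj_kronecker hn (Hn n) (Hn 2) y

theorem sum_rhoXorP (n : ℕ) : ∑ y : Bool, rhoXorP n y = ((2 : ℂ) ^ (n - 1))⁻¹ • 1 := by
  simp only [rhoXorP, ← smul_sum, sum_fiberwise, sum_single_one]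

theorem xorf_pair (a b : Bool) : xorf ![a, b] = xor a b := by
  simp [xorf, List.ofFn_succ]

theorem Hn_two_apply (a b c d : Bool) :
    Hn 2 ![a, b] ![c, d]
      = (if a && c then -1 else 1) * (if b && d then -1 else 1) / 2 := by
  have h : ((Real.sqrt 2 : ℝ) : ℂ) ^ 2 = 2 := by
    rw [← Complex.ofReal_pow, Real.sq_sqrt zero_le_two]; norm_num
  simp only [Hn, of_apply, Fin.prod_univ_two, cons_val_zero, cons_val_one, h]
  rfl

/-- `bellVec s t = β_{st} / √2`, so that `bellProj s t = ½ |β_{st}⟩⟨β_{st}|`. -/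
noncomputable def bellVec (s t : Bool) : (Fin 2 → Bool) → ℂ :=
  fun z => if xorf z = s then (if t && z 0 then -1 else 1) / 2 else 0

noncomputable def bellProj (s t : Bool) : Matrix (Fin 2 → Bool) (Fin 2 → Bool) ℂ :=
  vecMulVec (bellVec s t) (star (bellVec s t))

theorem rhoXorP_two (s : Bool) : rhoXorP 2 s = ∑ t : Bool, bellProj s t := by
  refine ext_finTwoBool fun a b c d => ?_
  simp only [rhoXorP, bellProj, bellVec, Matrix.smul_apply, Matrix.sum_apply, Fintype.sum_bool,
    Matrix.add_apply, vecMulVec_apply, Pi.star_apply, xorf_pair, sum_filter,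
    Fintype.sum_finTwoBool]
  cases s <;> cases a <;> cases b <;> cases c <;> cases d <;> norm_num

theorem rhoXorT_two (t : Bool) : rhoXorT 2 t = ∑ s : Bool, bellProj s t := by
  refine ext_finTwoBool fun a b c d => ?_
  simp only [rhoXorT, bellProj, bellVec, Matrix.smul_apply, Matrix.sum_apply, Fintype.sum_bool,
    Matrix.add_apply, vecMulVec_apply, Pi.star_apply, sum_filter, Fintype.sum_finTwoBool]
  cases t <;> cases a <;> cases b <;> cases c <;> cases d <;>
    norm_num [mul_single_one_mul_apply, conjTranspose_apply, Hn_two_apply, xorf_pair]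

theorem sum_bellProj : ∑ s : Bool, ∑ t : Bool, bellProj s t = (2 : ℂ)⁻¹ • 1 := by
  simp only [← rhoXorP_two, sum_rhoXorP]
  norm_num

theorem kronecker_quarter_sub_eq_sum {n : ℕ} (hn : 1 ≤ n)
    (Q : Matrix (Fin n → Bool) (Fin n → Bool) ℂ) (op ot : Bool) :
    Q ⊗ₖ ((1 / 4 : ℂ) • (1 : Matrix (Fin 2 → Bool) (Fin 2 → Bool) ℂ))
        - (rhoXorP' n op + rhoXorT' n ot)
      = (2 : ℂ)⁻¹ • ∑ s : Bool, ∑ t : Bool,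
          (Q - (rhoXorP n (xor op s) + rhoXorT n (xor ot t))) ⊗ₖ bellProj s t := by
  have hI : (1 / 4 : ℂ) • (1 : Matrix (Fin 2 → Bool) (Fin 2 → Bool) ℂ)
      = (2 : ℂ)⁻¹ • ∑ s : Bool, ∑ t : Bool, bellProj s t := by
    rw [sum_bellProj, smul_smul]
    norm_num
  rw [rhoXorP'_eq_sum hn, rhoXorT'_eq_sum hn, hI]
  simp only [rhoXorP_two, rhoXorT_two, Fintype.sum_bool, Bool.xor_true, Bool.xor_false,
    kronecker_add, add_kronecker, sub_kronecker, kronecker_smul]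
  module

theorem dual_feasible_step_general {n : ℕ} (hodd : Odd n)
    (Q : Matrix (Fin n → Bool) (Fin n → Bool) ℂ)
    (h : ∀ op ot : Bool, (Q - (rhoXorP n op + rhoXorT n ot)).PosSemidef) :
    ∀ op ot : Bool,
      ((Q ⊗ₖ ((1/4 : ℂ) • (1 : Matrix (Fin 2 → Bool) (Fin 2 → Bool) ℂ)))
        - (rhoXorP' n op + rhoXorT' n ot)).PosSemidef := by
  intro op ot
  rw [kronecker_quarter_sub_eq_sum hodd.pos]
  refine .smul (posSemidef_sum _ fun s _ => posSemidef_sum _ fun t _ => ?_)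
    (by norm_num [Complex.le_def])
  exact (h _ _).kronecker (posSemidef_vecMulVec_self_star _)

/-- If a Hermitian `Q` is dual-feasible for the PI₀-STAR(XOR) SDP on odd-length
strings of length `n`, then `Q ⊗ ¼I₄` is dual-feasible for length `n + 2`. -/
theorem dual_feasible_step {n : ℕ} (hodd : Odd n)
    (Q : Matrix (Fin n → Bool) (Fin n → Bool) ℂ) (hQ : Q.IsHermitian)
    (h : ∀ op ot : Bool, (Q - (rhoXorP n op + rhoXorT n ot)).PosSemidef) :
    ∀ op ot : Bool,
      ((Q ⊗ₖ ((1/4 : ℂ) • (1 : Matrix (Fin 2 → Bool) (Fin 2 → Bool) ℂ)))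
        - (rhoXorP' n op + rhoXorT' n ot)).PosSemidef :=
  dual_feasible_step_general hodd Q h
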